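/- arXiv:2108.05729 — 6 statements merged into one kernel-verified Lean document; each statement's English description precedes it below -/
import Mathlib

section
/- Let n > 1 and let Q be the linear span of {1, z, z², …, z^{n-1}} inside H²(𝔻). For a holomorphic self-map φ of 𝔻, the composition operator C_φ maps Q into Q if and only if φ is an affine map φ(z) = a + bz with |a| + |b| ≤ 1. -/
open Complex Metric Filter Set

noncomputable section

/-- A holomorphic self-map of the open unit disc. -/
def SelfMapD (φ : ℂ → ℂ) : Prop :=
  DifferentiableOn ℂ φ (Metric.ball (0:ℂ) 1) ∧
  Set.MapsTo φ (Metric.ball (0:ℂ) 1) (Metric.ball (0:ℂ) 1)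

/-- Membership in the Hardy space `H²(𝔻)`. -/
def MemHardy2 (f : ℂ → ℂ) : Prop :=
  DifferentiableOn ℂ f (Metric.ball (0:ℂ) 1) ∧
  ∃ M : ℝ, ∀ r : ℝ, 0 ≤ r → r < 1 →
    (∫ t in (0:ℝ)..(2 * Real.pi),
      ‖f ((r : ℂ) * Complex.exp (t * Complex.I))‖ ^ 2) ≤ M

/-- An inner function: a bounded-by-one holomorphic function on `𝔻` whose radial
boundary values have modulus one almost everywhere. -/
def InnerFunction (θ : ℂ → ℂ) : Prop :=
  DifferentiableOn ℂ θ (Metric.ball (0:ℂ) 1) ∧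
  (∀ z ∈ Metric.ball (0:ℂ) 1, ‖θ z‖ ≤ 1) ∧
  ∀ᵐ t : ℝ, Filter.Tendsto
    (fun r : ℝ => ‖θ ((r : ℂ) * Complex.exp (t * Complex.I))‖)
    (nhdsWithin 1 (Set.Iio 1)) (nhds 1)

/-- The `n`-th Taylor coefficient of `f` at the origin. -/
def hcoef (f : ℂ → ℂ) (n : ℕ) : ℂ := iteratedDeriv n f 0 / n.factorial

/-- The `H²` inner product, via Taylor coefficients. -/
def hInner (f g : ℂ → ℂ) : ℂ := ∑' n : ℕ, hcoef f n * (starRingEnd ℂ) (hcoef g n)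

/-- The square of the `H²` norm. -/
def hNorm2 (f : ℂ → ℂ) : ℝ := ∑' n : ℕ, ‖hcoef f n‖ ^ 2

/-- Membership in the model space `Q_θ = H² ⊖ θH²`. -/
def MemModel (θ f : ℂ → ℂ) : Prop :=
  MemHardy2 f ∧ ∀ g, MemHardy2 g → hInner f (fun z => θ z * g z) = 0

/-- The model space `Q_θ` is invariant under the composition operator `C_φ`. -/
def ModelInv (θ φ : ℂ → ℂ) : Prop :=
  ∀ f, MemModel θ f → MemModel θ (fun z => f (φ z))

/-- The Beurling subspace `θH²` is invariant under the composition operator `C_φ`. -/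
def BeurlingInv (θ φ : ℂ → ℂ) : Prop :=
  ∀ f, MemHardy2 f → ∃ g, MemHardy2 g ∧
    ∀ z ∈ Metric.ball (0:ℂ) 1, θ (φ z) * f (φ z) = θ z * g z

/-- A subspace of functions is invariant under `C_φ` (as functions on the disc). -/
def SpanInvOn (Q : Submodule ℂ (ℂ → ℂ)) (φ : ℂ → ℂ) : Prop :=
  ∀ f ∈ Q, ∃ g ∈ Q, ∀ z ∈ Metric.ball (0:ℂ) 1, f (φ z) = g z

/-- The (holomorphic extension of the) quotient `(θ∘σ)/θ` lies in `H²`. -/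
def QuotInH2 (θ σ : ℂ → ℂ) : Prop :=
  ∃ g, MemHardy2 g ∧ ∀ z ∈ Metric.ball (0:ℂ) 1, θ z ≠ 0 → g z = θ (σ z) / θ z

/-- The model space spanned by `z^t/(1-ᾱz)^{t+1}`, `0 ≤ t ≤ n-1`. -/
def Qball (α : ℂ) (n : ℕ) : Submodule ℂ (ℂ → ℂ) :=
  Submodule.span ℂ
    {f : ℂ → ℂ | ∃ t : ℕ, t < n ∧ f = fun z => z ^ t / (1 - (starRingEnd ℂ) α * z) ^ (t + 1)}

/-!
If `C_φ` preserves the polynomials of degree `< n`, then `φ = C_φ z` is (on the disc) a polynomial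
`p`, and `C_φ z^(n-1) = p^(n-1)` has degree `(n - 1) deg p < n`; as `n ≥ 2` this forces
`deg p ≤ 1`. Conversely, composing with an affine map does not raise the degree. Finally, if
`a + b z` maps the disc into itself, rotate a point `z` of modulus `r < 1` so that `b z` points in
the direction of `a`: then `‖a‖ + r ‖b‖ = ‖a + b z‖ < 1`, and `r → 1` gives `‖a‖ + ‖b‖ ≤ 1`.
-/

open Polynomial Topology

section

variable {R : Type*} [CommSemiring R]

lemma span_pow_eq_map_degreeLT (n : ℕ) :
    Submodule.span R {f : R → R | ∃ i : ℕ, i < n ∧ f = fun z => z ^ i} =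
      (degreeLT R n).map (LinearMap.pi leval) := by
  classical
  rw [degreeLT_eq_span_X_pow, Submodule.map_span]
  congr 1
  ext f
  simp [eq_comm, funext_iff]

lemma mem_span_pow_iff {n : ℕ} {f : R → R} :
    f ∈ Submodule.span R {f : R → R | ∃ i : ℕ, i < n ∧ f = fun z => z ^ i} ↔
      ∃ p : R[X], p.degree < n ∧ (fun z => p.eval z) = f := by
  rw [span_pow_eq_map_degreeLT, Submodule.mem_map]
  simp only [mem_degreeLT, funext_iff, LinearMap.pi_apply, leval_apply]

lemma degree_comp_lt_of_natDegree_le_one {p q : R[X]} {n : ℕ} (hp : p.degree < n)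
    (hq : q.natDegree ≤ 1) : (p.comp q).degree < n := by
  rcases eq_or_ne p 0 with rfl | hp0
  · simp
  calc (p.comp q).degree ≤ (p.comp q).natDegree := degree_le_natDegree
    _ ≤ (p.natDegree * 1 : ℕ) := by gcongr; exact natDegree_comp_le.trans (by gcongr)
    _ < n := by simpa using (natDegree_lt_iff_degree_lt hp0).mpr hp

lemma natDegree_le_one_of_degree_pow_lt [NoZeroDivisors R] {p : R[X]} {k : ℕ} (hk : 0 < k)
    (h : (p ^ k).degree < ↑(k + 1)) : p.natDegree ≤ 1 := by
  have hle := natDegree_le_of_degree_le (Order.le_of_lt_succ h)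
  rw [natDegree_pow] at hle
  exact le_of_mul_le_mul_left (by simpa using hle) hk

end

lemma Polynomial.eq_of_eqOn_of_mem_nhds {𝕜 : Type*} [NontriviallyNormedField 𝕜] {p q : 𝕜[X]}
    {s : Set 𝕜} {x : 𝕜} (hs : s ∈ 𝓝 x) (h : EqOn (fun z => p.eval z) (fun z => q.eval z) s) :
    p = q :=
  eq_of_infinite_eval_eq p q ((infinite_of_mem_nhds x hs).mono h)

lemma norm_add_norm_le_one_of_mapsTo_ball {a b : ℂ}
    (h : MapsTo (fun z => a + b * z) (ball 0 1) (ball 0 1)) : ‖a‖ + ‖b‖ ≤ 1 := by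
  have hr : ∀ r ∈ Ioo (0 : ℝ) 1, ‖a‖ + r * ‖b‖ < 1 := by
    intro r hr
    set z : ℂ := r * exp ((arg a - arg b : ℝ) * I)
    have hz : z ∈ ball (0 : ℂ) 1 := by
      rw [mem_ball_zero_iff, norm_mul, norm_exp_ofReal_mul_I, norm_real,
        Real.norm_of_nonneg hr.1.le, mul_one]
      exact hr.2
    have hval : a + b * z = ((‖a‖ + r * ‖b‖ : ℝ) : ℂ) * exp (arg a * I) := by
      nth_rw 1 [← norm_mul_exp_arg_mul_I a, ← norm_mul_exp_arg_mul_I b]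
      push_cast [z]
      rw [sub_mul, exp_sub]
      field_simp
    have hmaps : a + b * z ∈ ball (0 : ℂ) 1 := h hz
    rwa [mem_ball_zero_iff, hval, norm_mul, norm_exp_ofReal_mul_I, norm_real,
      Real.norm_of_nonneg (by positivity [hr.1.le]), mul_one] at hmaps
  have hlim : Tendsto (fun r : ℝ => ‖a‖ + r * ‖b‖) (𝓝[<] 1) (𝓝 (‖a‖ + 1 * ‖b‖)) :=
    ((by fun_prop : Continuous fun r : ℝ => ‖a‖ + r * ‖b‖).tendsto 1).mono_left
      nhdsWithin_le_nhds
  simpa using le_of_tendsto hlim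
    (eventually_of_mem (Ioo_mem_nhdsLT one_pos) fun r hr' => (hr r hr').le)

lemma spanInvOn_span_pow_of_eqOn_affine {n : ℕ} {φ : ℂ → ℂ} {a b : ℂ}
    (hφ : EqOn φ (fun z => a + b * z) (ball 0 1)) :
    SpanInvOn (Submodule.span ℂ {f : ℂ → ℂ | ∃ i : ℕ, i < n ∧ f = fun z => z ^ i}) φ := by
  intro f hf
  obtain ⟨p, hp, rfl⟩ := mem_span_pow_iff.mp hf
  refine ⟨fun z => (p.comp (C b * X + C a)).eval z,
    mem_span_pow_iff.mpr ⟨_, degree_comp_lt_of_natDegree_le_one hp natDegree_linear_le, rfl⟩,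
    fun z hz => ?_⟩
  simp [hφ hz, add_comm]

lemma exists_eqOn_affine_of_spanInvOn_span_pow {n : ℕ} (hn : 1 < n) {φ : ℂ → ℂ}
    (h : SpanInvOn (Submodule.span ℂ {f : ℂ → ℂ | ∃ i : ℕ, i < n ∧ f = fun z => z ^ i}) φ) :
    ∃ a b : ℂ, EqOn φ (fun z => a + b * z) (ball 0 1) := by
  obtain ⟨_, hg, hφ⟩ := h (fun z => z ^ 1) (Submodule.subset_span ⟨1, hn, rfl⟩)
  obtain ⟨p, -, rfl⟩ := mem_span_pow_iff.mp hg
  replace hφ : EqOn φ (fun z => p.eval z) (ball 0 1) := fun z hz => by simpa using hφ z hz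
  obtain ⟨_, hg', hφ'⟩ := h (fun z => z ^ (n - 1)) (Submodule.subset_span ⟨n - 1, by omega, rfl⟩)
  obtain ⟨q, hq, rfl⟩ := mem_span_pow_iff.mp hg'
  have hpq : p ^ (n - 1) = q := eq_of_eqOn_of_mem_nhds (ball_mem_nhds 0 one_pos) fun z hz => by
    simpa [hφ hz] using hφ' z hz
  have hdeg : p.natDegree ≤ 1 := natDegree_le_one_of_degree_pow_lt (k := n - 1) (by omega)
    (by rwa [hpq, Nat.sub_add_cancel hn.le])
  refine ⟨p.coeff 0, p.coeff 1, fun z hz => ?_⟩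
  rw [hφ hz, eq_X_add_C_of_natDegree_le_one hdeg]
  simp [add_comm]

/-- the span of `1, z, …, z^{n-1}` is `C_φ`-invariant iff `φ` is affine. -/
theorem polynomial_model_space_invariant_iff_affine
    (n : ℕ) (hn : 1 < n) (φ : ℂ → ℂ) (hφ : SelfMapD φ) :
    SpanInvOn (Submodule.span ℂ {f : ℂ → ℂ | ∃ i : ℕ, i < n ∧ f = fun z => z ^ i}) φ ↔
      ∃ a b : ℂ, ‖a‖ + ‖b‖ ≤ 1 ∧
        ∀ z ∈ Metric.ball (0:ℂ) 1, φ z = a + b * z := by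
  constructor
  · intro h
    obtain ⟨a, b, hab⟩ := exists_eqOn_affine_of_spanInvOn_span_pow hn h
    exact ⟨a, b, norm_add_norm_le_one_of_mapsTo_ball (hφ.2.congr hab), hab⟩
  · rintro ⟨a, b, -, hab⟩
    exact spanInvOn_span_pow_of_eqOn_affine hab
end
end

section
/- Fix a nonzero α ∈ 𝔻 and n ≥ 1, and let θ(z) = ((z−α)/(1−conj(α)z))ⁿ. The model space Q_θ = span{z^t/(1−conj(α)z)^{t+1} : 0 ≤ t ≤ n−1} is invariant under C_φ for a holomorphic self-map φ of 𝔻 if and only if there exists a nonzero scalar c with φ(z) = (1−c)/conj(α) + cz. -/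
open Complex Metric Filter Set

noncomputable section

/-!
Write `a = conj α` and `W(z) = 1 - a z`. Expanding `zˢ = zˢ (a z + W(z))^(n-1-s)` binomially shows
that `Q` is exactly `{q / Wⁿ : deg q < n}`. If `C_φ` preserves `Q`, then
`1 / W(φ) = q₀ / Wⁿ` and `1 / W(φ)ⁿ = q₁ / Wⁿ` with `deg q₀, deg q₁ < n`, hence the polynomial
identity `q₀ⁿ = q₁ W^(n(n-1))`. Comparing degrees makes `q₁` constant, so `q₀` divides a power of
the prime `W` and has degree `n - 1`; thus `q₀ = u W^(n-1)`, i.e. `W(φ) = W / u`, which says that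
`φ` is affine with `c = 1/u`. Conversely, for such `φ` one has `W(φ(z)) = c W(z)`, and composing
`q` with an affine map does not raise its degree.
-/

open Polynomial

namespace Polynomial

theorem X_pow_eq_sum_smul_X_pow_mul_one_sub_C_mul_X_pow {R : Type*} [CommRing R] (a : R) (s m : ℕ) :
    (X ^ s : R[X]) = ∑ j ∈ Finset.range (m + 1),
      (a ^ j * m.choose j) • (X ^ (s + j) * (1 - C a * X) ^ (m - j)) := by
  calc (X ^ s : R[X]) = X ^ s * (C a * X + (1 - C a * X)) ^ m := by simp
    _ = _ := by
      rw [add_pow, Finset.mul_sum]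
      refine Finset.sum_congr rfl fun j _ => ?_
      simp only [smul_eq_C_mul, map_mul, map_pow, map_natCast]
      ring

theorem comp_mem_degreeLT {R : Type*} [Semiring R] {n : ℕ} {p q : R[X]}
    (hp : p ∈ degreeLT R n) (hq : q.natDegree ≤ 1) : p.comp q ∈ degreeLT R n := by
  obtain rfl | hp0 := eq_or_ne p 0
  · simp
  rw [mem_degreeLT, ← natDegree_lt_iff_degree_lt hp0] at hp
  rw [mem_degreeLT]
  refine degree_le_natDegree.trans_lt (WithBot.coe_lt_coe.mpr ?_)
  calc (p.comp q).natDegree ≤ p.natDegree * q.natDegree := natDegree_comp_le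
    _ ≤ p.natDegree := mul_le_of_le_one_right (Nat.zero_le _) hq
    _ < n := hp

variable {K : Type*} [Field K]

theorem exists_eq_C_mul_pow_natDegree_of_dvd_pow {p q : K[X]} (hp : p.natDegree = 1) {m : ℕ}
    (h : q ∣ p ^ m) : ∃ u ≠ 0, q = C u * p ^ q.natDegree := by
  have hprime : Prime p :=
    (irreducible_of_degree_eq_one ((degree_eq_iff_natDegree_eq_of_pos one_pos).mpr hp)).prime
  obtain ⟨i, -, u, hu⟩ := (dvd_prime_pow hprime m).mp h
  obtain ⟨r, hr, hru⟩ := isUnit_iff.mp (u⁻¹).isUnit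
  have hq : q = C r * p ^ i := by rw [hru, mul_comm, ← hu, Units.mul_inv_cancel_right]
  refine ⟨r, hr.ne_zero, ?_⟩
  rw [hq, natDegree_C_mul hr.ne_zero, natDegree_pow, hp, mul_one]

theorem eq_C_mul_pow_of_pow_succ_eq_mul_pow {p q r : K[X]} {k : ℕ} (hp : p.natDegree = 1)
    (hq0 : q ≠ 0) (hq : q.natDegree ≤ k) (h : q ^ (k + 1) = r * p ^ ((k + 1) * k)) :
    ∃ u ≠ 0, q = C u * p ^ k := by
  have hp0 : p ≠ 0 := ne_zero_of_natDegree_gt (n := 0) (by omega)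
  have hr0 : r ≠ 0 := by
    rintro rfl
    exact pow_ne_zero _ hq0 (by rw [h, zero_mul])
  have hdeg := congrArg natDegree h
  rw [natDegree_pow, natDegree_mul hr0 (pow_ne_zero _ hp0), natDegree_pow, hp, mul_one] at hdeg
  have hr : r.natDegree = 0 := by nlinarith
  have hqk : q.natDegree = k := by nlinarith
  have hdvd : q ∣ p ^ ((k + 1) * k) := by
    have hunit : IsUnit (C (r.coeff 0)) :=
      isUnit_C.mpr (IsUnit.mk0 _ fun h0 => hr0 (by rw [eq_C_of_natDegree_eq_zero hr, h0, C_0]))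
    rw [← hunit.dvd_mul_left, ← eq_C_of_natDegree_eq_zero hr, ← h]
    exact dvd_pow_self q k.succ_ne_zero
  simpa only [hqk] using exists_eq_C_mul_pow_natDegree_of_dvd_pow hp hdvd

end Polynomial

def divOneSubMulPow (a : ℂ) (n : ℕ) : ℂ[X] →ₗ[ℂ] ℂ → ℂ where
  toFun q z := q.eval z / (1 - a * z) ^ n
  map_add' p q := by ext z; simp [add_div]
  map_smul' c q := by ext z; simp [mul_div_assoc]

@[simp]
theorem divOneSubMulPow_apply (a : ℂ) (n : ℕ) (q : ℂ[X]) (z : ℂ) :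
    divOneSubMulPow a n q z = q.eval z / (1 - a * z) ^ n := rfl

theorem divOneSubMulPow_X_pow_mul {a : ℂ} {n t : ℕ} (ht : t < n) :
    divOneSubMulPow a n (X ^ t * (1 - C a * X) ^ (n - 1 - t)) =
      fun z => z ^ t / (1 - a * z) ^ (t + 1) := by
  ext z
  obtain hw | hw := eq_or_ne (1 - a * z) 0
  · simp [hw, zero_pow (by omega : n ≠ 0)]
  · rw [divOneSubMulPow_apply, show n = (t + 1) + (n - 1 - t) by omega, pow_add]
    simp only [eval_mul, eval_pow, eval_sub, eval_one, eval_C, eval_X]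
    rw [show t + 1 + (n - 1 - t) - 1 - t = n - 1 - t by omega]
    field_simp

theorem Qball_eq_map (α : ℂ) (n : ℕ) :
    Qball α n = (degreeLT ℂ n).map (divOneSubMulPow (starRingEnd ℂ α) n) := by
  set a := starRingEnd ℂ α
  have generator_mem {t : ℕ} (ht : t < n) :
      X ^ t * (1 - C a * X) ^ (n - 1 - t) ∈ degreeLT ℂ n := by
    rw [mem_degreeLT]
    calc _ ≤ ((t + (n - 1 - t) : ℕ) : WithBot ℕ) := by compute_degree; norm_cast
      _ < n := by exact_mod_cast (by omega)
  apply le_antisymm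
  · refine Submodule.span_le.mpr ?_
    rintro _ ⟨t, ht, rfl⟩
    exact ⟨_, generator_mem ht, divOneSubMulPow_X_pow_mul ht⟩
  · classical
    rw [Submodule.map_le_iff_le_comap, degreeLT_eq_span_X_pow, Submodule.span_le,
      Finset.coe_image, Finset.coe_range]
    rintro _ ⟨s, hs : s < n, rfl⟩
    dsimp only
    rw [SetLike.mem_coe, Submodule.mem_comap,
      X_pow_eq_sum_smul_X_pow_mul_one_sub_C_mul_X_pow a s (n - 1 - s), map_sum]
    refine Submodule.sum_mem _ fun j hj => ?_
    rw [Finset.mem_range] at hj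
    rw [map_smul, show n - 1 - s - j = n - 1 - (s + j) by omega,
      divOneSubMulPow_X_pow_mul (by omega)]
    exact Submodule.smul_mem _ _ (Submodule.subset_span ⟨s + j, by omega, rfl⟩)

theorem one_sub_mul_ne_zero_of_mem_ball {u v : ℂ} (hu : u ∈ ball (0 : ℂ) 1)
    (hv : v ∈ ball (0 : ℂ) 1) : 1 - u * v ≠ 0 := by
  rw [mem_ball_zero_iff] at hu hv
  refine sub_ne_zero.mpr fun h => ?_
  have : ‖u * v‖ < 1 := by
    rw [norm_mul]
    exact mul_lt_one_of_nonneg_of_lt_one_left (norm_nonneg u) hu hv.le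
  rw [← h, norm_one] at this
  exact this.false

theorem SpanInvOn.exists_eval_div_pow_eq {a : ℂ} {n : ℕ} {φ : ℂ → ℂ}
    (h : SpanInvOn ((degreeLT ℂ n).map (divOneSubMulPow a n)) φ) {q : ℂ[X]}
    (hq : q ∈ degreeLT ℂ n) :
    ∃ p ∈ degreeLT ℂ n, ∀ z ∈ ball (0 : ℂ) 1,
      q.eval (φ z) / (1 - a * φ z) ^ n = p.eval z / (1 - a * z) ^ n := by
  obtain ⟨_, ⟨p, hp, rfl⟩, hφp⟩ := h _ (Submodule.mem_map_of_mem hq)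
  exact ⟨p, hp, hφp⟩

theorem exists_mul_one_sub_mul_comp_eq_of_spanInvOn {a : ℂ} (ha : a ∈ ball (0 : ℂ) 1)
    (ha0 : a ≠ 0) {n : ℕ} (hn : 1 ≤ n) {φ : ℂ → ℂ} (hφ : MapsTo φ (ball 0 1) (ball 0 1))
    (hinv : SpanInvOn ((degreeLT ℂ n).map (divOneSubMulPow a n)) φ) :
    ∃ u ≠ 0, ∀ z ∈ ball (0 : ℂ) 1, u * (1 - a * φ z) = 1 - a * z := by
  obtain ⟨k, rfl⟩ : ∃ k, n = k + 1 := ⟨n - 1, by omega⟩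
  have hW z (hz : z ∈ ball (0 : ℂ) 1) := one_sub_mul_ne_zero_of_mem_ball ha hz
  have hWφ z (hz : z ∈ ball (0 : ℂ) 1) := one_sub_mul_ne_zero_of_mem_ball ha (hφ hz)
  obtain ⟨q₀, hq₀, h₀⟩ := hinv.exists_eval_div_pow_eq (q := (1 - C a * X) ^ k) <| by
    rw [mem_degreeLT]
    calc _ ≤ ((k : ℕ) : WithBot ℕ) := by compute_degree; exact le_rfl
      _ < _ := by exact_mod_cast k.lt_succ_self
  obtain ⟨q₁, -, h₁⟩ := hinv.exists_eval_div_pow_eq (q := 1) <| by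
    rw [mem_degreeLT, degree_one]
    exact_mod_cast k.succ_pos
  have e₀ z (hz : z ∈ ball (0 : ℂ) 1) : q₀.eval z * (1 - a * φ z) = (1 - a * z) ^ (k + 1) := by
    have := h₀ z hz
    simp only [eval_pow, eval_sub, eval_one, eval_mul, eval_C, eval_X] at this
    rw [div_eq_div_iff (pow_ne_zero _ (hWφ z hz)) (pow_ne_zero _ (hW z hz))] at this
    exact mul_left_cancel₀ (pow_ne_zero k (hWφ z hz)) (by linear_combination -this)
  have e₁ z (hz : z ∈ ball (0 : ℂ) 1) :
      q₁.eval z * (1 - a * φ z) ^ (k + 1) = (1 - a * z) ^ (k + 1) := by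
    have := h₁ z hz
    rw [eval_one, div_eq_div_iff (pow_ne_zero _ (hWφ z hz)) (pow_ne_zero _ (hW z hz))] at this
    linear_combination -this
  have hpow : q₀ ^ (k + 1) = q₁ * (1 - C a * X) ^ ((k + 1) * k) := by
    refine eq_of_infinite_eval_eq _ _ <|
      (infinite_of_mem_nhds 0 (ball_mem_nhds 0 one_pos)).mono fun z hz => ?_
    simp only [Set.mem_ofPred_eq, eval_pow, eval_mul, eval_sub, eval_one, eval_C, eval_X]
    refine mul_right_cancel₀ (pow_ne_zero (k + 1) (hWφ z hz)) ?_
    rw [← mul_pow, e₀ z hz, ← pow_mul]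
    linear_combination (-(1 - a * z) ^ ((k + 1) * k)) * e₁ z hz
  have hq₀0 : q₀ ≠ 0 := by
    rintro rfl
    simpa using e₀ 0 (mem_ball_self one_pos)
  have hWdeg : (1 - C a * X).natDegree = 1 := by compute_degree!
  obtain ⟨u, hu, rfl⟩ := eq_C_mul_pow_of_pow_succ_eq_mul_pow hWdeg hq₀0
    (Nat.lt_succ_iff.mp ((natDegree_lt_iff_degree_lt hq₀0).mpr (mem_degreeLT.mp hq₀))) hpow
  refine ⟨u, hu, fun z hz => mul_left_cancel₀ (pow_ne_zero k (hW z hz)) ?_⟩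
  have := e₀ z hz
  simp only [eval_mul, eval_pow, eval_sub, eval_one, eval_C, eval_X] at this
  linear_combination this

theorem exists_affine_of_spanInvOn {a : ℂ} (ha : a ∈ ball (0 : ℂ) 1) (ha0 : a ≠ 0)
    {n : ℕ} (hn : 1 ≤ n) {φ : ℂ → ℂ} (hφ : MapsTo φ (ball 0 1) (ball 0 1))
    (hinv : SpanInvOn ((degreeLT ℂ n).map (divOneSubMulPow a n)) φ) :
    ∃ c : ℂ, c ≠ 0 ∧ ∀ z ∈ ball (0 : ℂ) 1, φ z = (1 - c) / a + c * z := by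
  obtain ⟨u, hu, hφu⟩ := exists_mul_one_sub_mul_comp_eq_of_spanInvOn ha ha0 hn hφ hinv
  refine ⟨u⁻¹, inv_ne_zero hu, fun z hz => ?_⟩
  field_simp
  linear_combination -hφu z hz

theorem spanInvOn_of_affine {a : ℂ} (ha0 : a ≠ 0) {n : ℕ} {φ : ℂ → ℂ} {c : ℂ}
    (hφ : ∀ z ∈ ball (0 : ℂ) 1, φ z = (1 - c) / a + c * z) :
    SpanInvOn ((degreeLT ℂ n).map (divOneSubMulPow a n)) φ := by
  rintro _ ⟨q, hq, rfl⟩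
  have hL : (C ((1 - c) / a) + C c * X).natDegree ≤ 1 := by compute_degree
  refine ⟨_, Submodule.mem_map_of_mem (Submodule.smul_mem _ (c ^ n)⁻¹ (comp_mem_degreeLT hq hL)),
    fun z hz => ?_⟩
  have hLz : (C ((1 - c) / a) + C c * X).eval z = φ z := by simp [hφ z hz]
  have hWφ : 1 - a * φ z = c * (1 - a * z) := by
    rw [hφ z hz]
    field_simp
    ring
  simp only [divOneSubMulPow_apply, eval_smul, eval_comp, hLz, smul_eq_mul, hWφ, mul_pow]
  rw [div_eq_mul_inv, div_eq_mul_inv, mul_inv]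
  ring

/-- for `θ = b_α^n` with `α ≠ 0`, the model space is `C_φ`-invariant iff
`φ(z) = (1-c)/conj(α) + cz` for some `c ≠ 0`. -/
theorem blaschke_power_model_space_invariant_iff
    (α : ℂ) (hα : α ∈ Metric.ball (0:ℂ) 1) (hα0 : α ≠ 0)
    (n : ℕ) (hn : 1 ≤ n) (φ : ℂ → ℂ) (hφ : SelfMapD φ) :
    SpanInvOn (Qball α n) φ ↔
      ∃ c : ℂ, c ≠ 0 ∧ ∀ z ∈ Metric.ball (0:ℂ) 1,
        φ z = (1 - c) / (starRingEnd ℂ) α + c * z := by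
  have ha : starRingEnd ℂ α ∈ ball (0 : ℂ) 1 := by simpa using hα
  have ha0 : starRingEnd ℂ α ≠ 0 := by simpa using hα0
  rw [Qball_eq_map]
  exact ⟨exists_affine_of_spanInvOn ha ha0 hn hφ.2,
    fun ⟨_, _, hφc⟩ => spanInvOn_of_affine ha0 hφc⟩
end
end

section
/- Let α ∈ 𝔻 be nonzero and θ(z) = z·(z−α)/(1−conj(α)z). The two-dimensional model space Q_θ = span{1, 1/(1−conj(α)z)} is invariant under C_φ if and only if φ(z) = ((c₁−1) + (conj(α)+c₂)z)/(conj(α)(c₁ + c₂ z)) for scalars c₁, c₂ not both zero. -/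
open Complex Metric Filter Set

noncomputable section

open Topology

/-! Write `β = conj α` and `k z = (1 - β z)⁻¹`. Since constants compose to constants,
invariance of `span {1, k}` means `k ∘ φ = a + b k` on the disc, i.e.
`k ∘ φ = (c₁ + c₂ z) / (1 - β z)`, and solving `1 - β φ z = (1 - β z) / (c₁ + c₂ z)` for `φ z`
gives the Möbius formula. Conversely, `c₁ + c₂ z` cannot vanish in the disc: its zero would be a
pole of the formula (the numerator is then `β z - 1 ≠ 0`), which a self-map of the disc cannot
have. -/

lemma one_sub_mul_ne_zero {R : Type*} [NormedRing R] [NormOneClass R] {β z : R}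
    (hβ : ‖β‖ < 1) (hz : ‖z‖ ≤ 1) : 1 - β * z ≠ 0 := by
  refine sub_ne_zero.mpr fun h => ?_
  have : ‖β * z‖ < 1 :=
    (norm_mul_le β z).trans_lt (mul_lt_one_of_nonneg_of_lt_one_left (norm_nonneg β) hβ hz)
  simp [← h] at this

lemma spanInvOn_span_const_pair_iff (k φ : ℂ → ℂ) :
    SpanInvOn (Submodule.span ℂ {fun _ => 1, k}) φ ↔
      ∃ a b : ℂ, ∀ z ∈ ball (0:ℂ) 1, k (φ z) = a + b * k z := by
  constructor
  · intro hinv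
    obtain ⟨g, hg, hkg⟩ := hinv k (Submodule.subset_span (mem_insert_of_mem _ rfl))
    obtain ⟨a, b, rfl⟩ := Submodule.mem_span_pair.mp hg
    exact ⟨a, b, fun z hz => by simpa using hkg z hz⟩
  · rintro ⟨a, b, hk⟩ f hf
    obtain ⟨a', b', rfl⟩ := Submodule.mem_span_pair.mp hf
    refine ⟨(a' + b' * a) • (fun _ => 1) + (b' * b) • k,
      Submodule.mem_span_pair.mpr ⟨_, _, rfl⟩, fun z hz => ?_⟩
    simp only [Pi.add_apply, Pi.smul_apply, smul_eq_mul, mul_one, hk z hz]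
    ring

lemma exists_add_mul_inv_iff_exists_div {β : ℂ} (hβ : β ≠ 0) {s : Set ℂ}
    (hs : ∀ z ∈ s, 1 - β * z ≠ 0) (F : ℂ → ℂ) :
    (∃ a b : ℂ, ∀ z ∈ s, F z = a + b * (1 - β * z)⁻¹) ↔
      ∃ c₁ c₂ : ℂ, ∀ z ∈ s, F z = (c₁ + c₂ * z) / (1 - β * z) := by
  constructor
  · rintro ⟨a, b, hF⟩
    refine ⟨a + b, -(a * β), fun z hz => ?_⟩
    rw [hF z hz]
    field_simp [hs z hz]
    ring
  · rintro ⟨c₁, c₂, hF⟩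
    refine ⟨-c₂ / β, c₁ + c₂ / β, fun z hz => ?_⟩
    have hu : 1 - z * β ≠ 0 := mul_comm β z ▸ hs z hz
    rw [hF z hz]
    field_simp
    ring

lemma eq_div_iff_inv_one_sub_mul_eq {β w E u : ℂ} (hβ : β ≠ 0) (hE : E ≠ 0) :
    w = (E - u) / (β * E) ↔ (1 - β * w)⁻¹ = E / u := by
  rw [eq_div_iff (mul_ne_zero hβ hE), inv_eq_iff_eq_inv, inv_div, eq_div_iff hE]
  constructor <;> intro h <;> linear_combination (-1 : ℂ) * h

lemma moebius_denom_ne_zero {β c₁ c₂ z : ℂ} (hβ1 : ‖β‖ < 1) (hβ0 : β ≠ 0)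
    (hne : c₁ ≠ 0 ∨ c₂ ≠ 0)
    (hmaps : ∀ w ∈ ball (0:ℂ) 1, ‖((c₁ - 1) + (β + c₂) * w) / (β * (c₁ + c₂ * w))‖ < 1)
    (hz : z ∈ ball (0:ℂ) 1) : c₁ + c₂ * z ≠ 0 := by
  intro hz0
  have hc₂ : c₂ ≠ 0 := by
    rintro rfl
    simp_all
  have hnum : (c₁ - 1) + (β + c₂) * z ≠ 0 := by
    have := one_sub_mul_ne_zero hβ1 (mem_ball_zero_iff.mp hz).le
    contrapose! this
    linear_combination hz0 - this
  have hlt : ∀ᶠ w in 𝓝[≠] z,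
      ‖(c₁ - 1) + (β + c₂) * w‖ ≤ ‖β * (c₁ + c₂ * w)‖ := by
    filter_upwards [self_mem_nhdsWithin,
      nhdsWithin_le_nhds (isOpen_ball.mem_nhds hz)] with w hwz hw
    have hden : β * (c₁ + c₂ * w) ≠ 0 := by
      refine mul_ne_zero hβ0 fun h => hwz ?_
      exact mul_left_cancel₀ hc₂ (by linear_combination h - hz0)
    exact ((div_lt_one (norm_pos_iff.mpr hden)).mp (by simpa using hmaps w hw)).le
  have hnum_cont : Continuous fun w : ℂ => ‖(c₁ - 1) + (β + c₂) * w‖ := by fun_prop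
  have hden_cont : Continuous fun w : ℂ => ‖β * (c₁ + c₂ * w)‖ := by fun_prop
  have hle : ‖(c₁ - 1) + (β + c₂) * z‖ ≤ ‖β * (c₁ + c₂ * z)‖ :=
    le_of_tendsto_of_tendsto ((hnum_cont.tendsto z).mono_left nhdsWithin_le_nhds)
      ((hden_cont.tendsto z).mono_left nhdsWithin_le_nhds) hlt
  simp [hz0, hnum] at hle

lemma inv_one_sub_mul_comp_eq_div_iff {β c₁ c₂ : ℂ} {φ : ℂ → ℂ} (hβ1 : ‖β‖ < 1)
    (hβ0 : β ≠ 0) (hφ : MapsTo φ (ball (0:ℂ) 1) (ball (0:ℂ) 1)) :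
    (∀ z ∈ ball (0:ℂ) 1, (1 - β * φ z)⁻¹ = (c₁ + c₂ * z) / (1 - β * z)) ↔
      (c₁ ≠ 0 ∨ c₂ ≠ 0) ∧ ∀ z ∈ ball (0:ℂ) 1,
        φ z = ((c₁ - 1) + (β + c₂) * z) / (β * (c₁ + c₂ * z)) := by
  have hu : ∀ z ∈ ball (0:ℂ) 1, 1 - β * z ≠ 0 := fun z hz =>
    one_sub_mul_ne_zero hβ1 (mem_ball_zero_iff.mp hz).le
  have hφu : ∀ z ∈ ball (0:ℂ) 1, 1 - β * φ z ≠ 0 := fun z hz => hu _ (hφ hz)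
  have hnum_eq : ∀ z : ℂ, (c₁ - 1) + (β + c₂) * z = (c₁ + c₂ * z) - (1 - β * z) :=
    fun z => by ring
  simp only [hnum_eq]
  constructor
  · intro h
    have hE : ∀ z ∈ ball (0:ℂ) 1, c₁ + c₂ * z ≠ 0 := fun z hz =>
      (div_ne_zero_iff.mp (h z hz ▸ inv_ne_zero (hφu z hz))).1
    refine ⟨Or.inl (by simpa using hE 0 (mem_ball_self one_pos)), fun z hz => ?_⟩
    exact (eq_div_iff_inv_one_sub_mul_eq hβ0 (hE z hz)).mpr (h z hz)
  · rintro ⟨hne, h⟩ z hz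
    have hE : c₁ + c₂ * z ≠ 0 := moebius_denom_ne_zero hβ1 hβ0 hne
      (fun w hw => by simpa [hnum_eq, ← h w hw] using hφ hw) hz
    exact (eq_div_iff_inv_one_sub_mul_eq hβ0 hE).mp (h z hz)

/-- for `θ = z·b_α` with `α ≠ 0`, the model space `span{1, (1-conj(α)z)⁻¹}` is
`C_φ`-invariant iff `φ` is the indicated Möbius map. -/
theorem two_dim_model_space_invariant_iff_moebius
    (α : ℂ) (hα : α ∈ Metric.ball (0:ℂ) 1) (hα0 : α ≠ 0)
    (φ : ℂ → ℂ) (hφ : SelfMapD φ) :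
    SpanInvOn (Submodule.span ℂ
        {(fun _ => 1 : ℂ → ℂ), fun z => (1 - (starRingEnd ℂ) α * z)⁻¹}) φ ↔
      ∃ c₁ c₂ : ℂ, (c₁ ≠ 0 ∨ c₂ ≠ 0) ∧ ∀ z ∈ Metric.ball (0:ℂ) 1,
        φ z = ((c₁ - 1) + ((starRingEnd ℂ) α + c₂) * z) /
          ((starRingEnd ℂ) α * (c₁ + c₂ * z)) := by
  have hβ1 : ‖(starRingEnd ℂ) α‖ < 1 := by simpa using hα
  have hβ0 : (starRingEnd ℂ) α ≠ 0 := by simpa using hα0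
  rw [spanInvOn_span_const_pair_iff, exists_add_mul_inv_iff_exists_div hβ0
    (fun z hz => one_sub_mul_ne_zero hβ1 (mem_ball_zero_iff.mp hz).le)]
  exact exists₂_congr fun c₁ c₂ => inv_one_sub_mul_comp_eq_div_iff hβ1 hβ0 hφ.2
end
end

section
/- Let φ be a holomorphic self-map of 𝔻 such that θH²(𝔻) is invariant under C_φ for every inner function θ. Then φ is the identity map on 𝔻. -/
open Complex Metric Filter Set

noncomputable section

/-! Invariance of `b_α H²` applied to `f = 1` gives `b_α (φ α) = b_α α * g α = 0`, and the
Blaschke factor `b_α` has no zero in the closed disc other than `α`. -/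

def blaschkeFactor (α : ℂ) (z : ℂ) : ℂ := (α - z) / (1 - (starRingEnd ℂ) α * z)

lemma normSq_one_sub_conj_mul_sub_normSq_sub (α z : ℂ) :
    normSq (1 - (starRingEnd ℂ) α * z) - normSq (α - z) = (1 - normSq α) * (1 - normSq z) := by
  simp only [normSq_apply, sub_re, sub_im, one_re, one_im, mul_re, mul_im, conj_re, conj_im]
  ring

lemma one_sub_conj_mul_ne_zero {α z : ℂ} (hα : ‖α‖ < 1) (hz : ‖z‖ ≤ 1) :
    1 - (starRingEnd ℂ) α * z ≠ 0 := by
  have : ‖(starRingEnd ℂ) α * z‖ < 1 := by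
    rw [norm_mul, norm_conj]
    nlinarith [norm_nonneg α, norm_nonneg z]
  intro h
  rw [← sub_eq_zero.mp h, norm_one] at this
  exact this.false

lemma norm_blaschkeFactor_le_one {α z : ℂ} (hα : ‖α‖ < 1) (hz : ‖z‖ ≤ 1) :
    ‖blaschkeFactor α z‖ ≤ 1 := by
  rw [blaschkeFactor, norm_div, div_le_one (norm_pos_iff.mpr (one_sub_conj_mul_ne_zero hα hz))]
  have hα2 : normSq α ≤ 1 := by rw [← Complex.sq_norm]; nlinarith [norm_nonneg α]
  have hz2 : normSq z ≤ 1 := by rw [← Complex.sq_norm]; nlinarith [norm_nonneg z]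
  have := normSq_one_sub_conj_mul_sub_normSq_sub α z
  rw [← sq_le_sq₀ (norm_nonneg _) (norm_nonneg _), Complex.sq_norm, Complex.sq_norm]
  nlinarith [mul_nonneg (sub_nonneg.mpr hα2) (sub_nonneg.mpr hz2)]

lemma norm_blaschkeFactor_of_norm_eq_one {α z : ℂ} (hα : ‖α‖ < 1) (hz : ‖z‖ = 1) :
    ‖blaschkeFactor α z‖ = 1 := by
  rw [blaschkeFactor, norm_div,
    div_eq_one_iff_eq (norm_ne_zero_iff.mpr (one_sub_conj_mul_ne_zero hα hz.le)),
    ← sq_eq_sq₀ (norm_nonneg _) (norm_nonneg _), Complex.sq_norm, Complex.sq_norm]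
  have hz2 : normSq z = 1 := by rw [← Complex.sq_norm, hz, one_pow]
  have := normSq_one_sub_conj_mul_sub_normSq_sub α z
  rw [hz2, sub_self, mul_zero, sub_eq_zero] at this
  exact this.symm

lemma differentiableAt_blaschkeFactor {α z : ℂ} (hα : ‖α‖ < 1) (hz : ‖z‖ ≤ 1) :
    DifferentiableAt ℂ (blaschkeFactor α) z :=
  ((differentiableAt_const α).sub differentiableAt_id).div
    ((differentiableAt_const 1).sub ((differentiableAt_const _).mul differentiableAt_id))
    (one_sub_conj_mul_ne_zero hα hz)

lemma blaschkeFactor_eq_zero_iff {α z : ℂ} (hα : ‖α‖ < 1) (hz : ‖z‖ ≤ 1) :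
    blaschkeFactor α z = 0 ↔ z = α := by
  rw [blaschkeFactor, div_eq_zero_iff, or_iff_left (one_sub_conj_mul_ne_zero hα hz), sub_eq_zero,
    eq_comm]

lemma innerFunction_blaschkeFactor {α : ℂ} (hα : ‖α‖ < 1) :
    InnerFunction (blaschkeFactor α) := by
  refine ⟨fun z hz => ?_, fun z hz => ?_, .of_forall fun t => ?_⟩
  · exact (differentiableAt_blaschkeFactor hα (mem_ball_zero_iff.mp hz).le).differentiableWithinAt
  · exact norm_blaschkeFactor_le_one hα (mem_ball_zero_iff.mp hz).le
  have hw : ‖exp (t * I)‖ = 1 := norm_exp_ofReal_mul_I t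
  have hcont : ContinuousAt (fun r : ℝ => blaschkeFactor α (r * exp (t * I))) 1 := by
    refine ((differentiableAt_blaschkeFactor hα ?_).continuousAt).comp
      (f := fun r : ℝ => (r : ℂ) * exp (t * I)) (by fun_prop)
    simp [hw]
  have := hcont.norm.tendsto.mono_left (nhdsWithin_le_nhds (s := Iio 1))
  simpa [hw, norm_blaschkeFactor_of_norm_eq_one hα] using this

lemma memHardy2_const (c : ℂ) : MemHardy2 fun _ => c :=
  ⟨differentiableOn_const c, 2 * Real.pi * ‖c‖ ^ 2, fun r _ _ => by simp⟩

lemma BeurlingInv.apply_eq_zero_of_eq_zero {θ φ : ℂ → ℂ} (h : BeurlingInv θ φ) {α : ℂ}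
    (hα : α ∈ ball (0 : ℂ) 1) (hθα : θ α = 0) : θ (φ α) = 0 := by
  obtain ⟨g, -, hg⟩ := h (fun _ => 1) (memHardy2_const 1)
  simpa [hθα] using hg α hα

/-- if `θH²` is `C_φ`-invariant for every inner `θ`, then `φ` is the identity. -/
theorem all_beurling_invariant_implies_identity
    (φ : ℂ → ℂ) (hφ : SelfMapD φ)
    (h : ∀ θ : ℂ → ℂ, InnerFunction θ → BeurlingInv θ φ) :
    ∀ z ∈ Metric.ball (0:ℂ) 1, φ z = z := by
  intro α hα
  have hα' : ‖α‖ < 1 := mem_ball_zero_iff.mp hα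
  have hb : blaschkeFactor α (φ α) = 0 :=
    (h _ (innerFunction_blaschkeFactor hα')).apply_eq_zero_of_eq_zero hα
      ((blaschkeFactor_eq_zero_iff hα' hα'.le).mpr rfl)
  exact (blaschkeFactor_eq_zero_iff hα' (mem_ball_zero_iff.mp (hφ.2 hα)).le).mp hb
end
end

section
/- A linear fractional transformation φ(z) = (az+b)/(cz+d) maps the open unit disc 𝔻 into itself if and only if |b·conj(d) − a·conj(c)| + |ad − bc| ≤ |d|² − |c|². -/
open Complex Metric Filter Set

noncomputable section

/-! The map `φ` sends `𝔻` onto `{w : |d w - b| < |a - c w|}`, as its inverse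
`w ↦ (d w - b)/(a - c w)` shows. With `B = |d|² - |c|²`, `p = b d̄ - a c̄`, `q = a d - b c` one has
`|a - c w|² - |d w - b|² = |a|² - |b|² - B |w|² + 2 Re (w p̄)`, whose maximum over the circle
`|w| = r` is `f r = |a|² - |b|² - B r² + 2 |p| r`. So `φ(𝔻) ⊆ 𝔻` iff `f ≤ 0` on `[1, ∞)`, and since
`B f r = |q|² - (B r - |p|)²` (a Lagrange-type identity), this happens iff `|p| + |q| ≤ B`. -/

open ComplexConjugate

theorem sq_norm_sub_mul_sub_sq_norm_mul_sub (a b c d w : ℂ) :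
    ‖a - c * w‖ ^ 2 - ‖d * w - b‖ ^ 2 =
      ‖a‖ ^ 2 - ‖b‖ ^ 2 - (‖d‖ ^ 2 - ‖c‖ ^ 2) * ‖w‖ ^ 2 +
        2 * (w * conj (b * conj d - a * conj c)).re := by
  simp only [Complex.sq_norm, Complex.normSq_apply, Complex.mul_re, Complex.mul_im,
    Complex.sub_re, Complex.sub_im, Complex.conj_re, Complex.conj_im]
  ring

theorem sq_norm_sub_sq_norm_mul_sq_norm_sub_sq_norm (a b c d : ℂ) :
    (‖d‖ ^ 2 - ‖c‖ ^ 2) * (‖a‖ ^ 2 - ‖b‖ ^ 2) =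
      ‖a * d - b * c‖ ^ 2 - ‖b * conj d - a * conj c‖ ^ 2 := by
  simp only [Complex.sq_norm, Complex.normSq_apply, Complex.mul_re, Complex.mul_im,
    Complex.sub_re, Complex.sub_im, Complex.conj_re, Complex.conj_im]
  ring

theorem image_lft_ball {a b c d : ℂ} (hden : ∀ z ∈ ball (0 : ℂ) 1, c * z + d ≠ 0)
    (hdet : a * d - b * c ≠ 0) :
    (fun z => (a * z + b) / (c * z + d)) '' ball 0 1 = {w | ‖d * w - b‖ < ‖a - c * w‖} := by
  ext w
  constructor
  · rintro ⟨z, hz, rfl⟩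
    have he := hden z hz
    rw [mem_ball_zero_iff] at hz
    have hsrc : a - c * ((a * z + b) / (c * z + d)) = (a * d - b * c) / (c * z + d) := by
      rw [mul_div_assoc', sub_div' he]; ring
    have htgt : d * ((a * z + b) / (c * z + d)) - b = (a * d - b * c) * z / (c * z + d) := by
      rw [mul_div_assoc', div_sub' he]; ring
    rw [mem_ofPred_eq, hsrc, htgt, norm_div, norm_div, norm_mul]
    gcongr
    exact mul_lt_of_lt_one_right (norm_pos_iff.2 hdet) hz
  · intro hw
    rw [mem_ofPred_eq] at hw
    have hac : a - c * w ≠ 0 := norm_pos_iff.1 ((norm_nonneg _).trans_lt hw)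
    refine ⟨(d * w - b) / (a - c * w), ?_, ?_⟩
    · rw [mem_ball_zero_iff, norm_div]
      exact (div_lt_one (norm_pos_iff.2 hac)).2 hw
    · have hden' : c * ((d * w - b) / (a - c * w)) + d = (a * d - b * c) / (a - c * w) := by
        rw [mul_div_assoc', div_add' _ _ _ hac]; ring
      have hnum : a * ((d * w - b) / (a - c * w)) + b = (a * d - b * c) * w / (a - c * w) := by
        rw [mul_div_assoc', div_add' _ _ _ hac]; ring
      dsimp only
      rw [hden', hnum, div_div_div_cancel_right₀ hac, mul_div_cancel_left₀ _ hdet]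

theorem exists_norm_eq_re_mul_conj_eq (p : ℂ) {r : ℝ} (hr : 0 ≤ r) :
    ∃ w : ℂ, ‖w‖ = r ∧ (w * conj p).re = r * ‖p‖ := by
  set u := exp (arg p * I)
  have hu : ‖u‖ = 1 := norm_exp_ofReal_mul_I _
  have hcp : conj p = ‖p‖ * conj u := by
    conv_lhs => rw [← norm_mul_exp_arg_mul_I p]
    rw [map_mul, conj_ofReal]
  have huu : u * conj u = 1 := by rw [mul_conj, normSq_eq_norm_sq, hu]; simp
  refine ⟨r * u, by rw [norm_mul, hu, norm_real, Real.norm_of_nonneg hr, mul_one], ?_⟩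
  calc (r * u * conj p).re = (((r * ‖p‖ : ℝ) : ℂ) * (u * conj u)).re := by
        rw [hcp]; push_cast; ring_nf
    _ = r * ‖p‖ := by rw [huu, mul_one, ofReal_re]

theorem forall_one_le_norm_quadratic_nonpos_iff (α B : ℝ) (p : ℂ) :
    (∀ w : ℂ, 1 ≤ ‖w‖ → α - B * ‖w‖ ^ 2 + 2 * (w * conj p).re ≤ 0) ↔
      ∀ r : ℝ, 1 ≤ r → α - B * r ^ 2 + 2 * ‖p‖ * r ≤ 0 := by
  constructor
  · intro h r hr
    obtain ⟨w, hw, hwp⟩ := exists_norm_eq_re_mul_conj_eq p (zero_le_one.trans hr)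
    have := h w (hw ▸ hr)
    rw [hw, hwp] at this
    linarith
  · intro h w hw
    have hre : (w * conj p).re ≤ ‖w‖ * ‖p‖ := by
      simpa only [norm_mul, norm_conj] using re_le_norm (w * conj p)
    linarith [h ‖w‖ hw]

theorem forall_one_le_quadratic_nonpos_iff {α B P Q : ℝ} (hP : 0 ≤ P) (hQ : 0 < Q)
    (hα : B * α = Q ^ 2 - P ^ 2) :
    (∀ r : ℝ, 1 ≤ r → α - B * r ^ 2 + 2 * P * r ≤ 0) ↔ P + Q ≤ B := by
  constructor
  · intro h
    by_contra! hlt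
    rcases le_or_gt B 0 with hB | hB
    · have hK : 0 < 2 * P - B := by
        by_contra! hK
        obtain rfl : B = 0 := by linarith
        obtain rfl : P = 0 := by linarith
        nlinarith
      set r := 1 + |α| / (2 * P - B)
      have hr : 1 ≤ r := le_add_of_nonneg_right (by positivity)
      have hKr : (2 * P - B) * r = 2 * P - B + |α| := by
        rw [mul_add, mul_div_cancel₀ _ hK.ne', mul_one]
      have hBr : -B * r ≤ -B * r ^ 2 :=
        mul_le_mul_of_nonneg_left (by nlinarith) (neg_nonneg.2 hB)
      nlinarith [h r hr, le_abs_self α, neg_abs_le α]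
    · have hPB : B + Q ≤ P := by nlinarith [h 1 le_rfl]
      -- so the vertex `P / B` of the parabola lies in `[1, ∞)`
      have hvertex : B * (P / B) = P := mul_div_cancel₀ _ hB.ne'
      nlinarith [h (P / B) ((one_le_div hB).2 (by linarith))]
  · intro hPQB r hr
    have hB : 0 < B := by linarith
    have hQr : Q ≤ B * r - P := by nlinarith
    refine nonpos_of_mul_nonpos_right ?_ hB
    nlinarith [mul_le_mul hQr hQr hQ.le (hQ.le.trans hQr)]

/-- a linear fractional transformation maps `𝔻` into itself iff
`|b·conj(d) - a·conj(c)| + |ad - bc| ≤ |d|² - |c|²`. -/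
theorem lft_self_map_iff
    (a b c d : ℂ) (hden : ∀ z ∈ Metric.ball (0:ℂ) 1, c * z + d ≠ 0)
    (hdet : a * d - b * c ≠ 0) :
    (∀ z ∈ Metric.ball (0:ℂ) 1, (a * z + b) / (c * z + d) ∈ Metric.ball (0:ℂ) 1) ↔
      ‖b * (starRingEnd ℂ) d - a * (starRingEnd ℂ) c‖ +
        ‖a * d - b * c‖ ≤ ‖d‖ ^ 2 - ‖c‖ ^ 2 := by
  have hQ : 0 < ‖a * d - b * c‖ := norm_pos_iff.2 hdet
  calc (∀ z ∈ ball (0:ℂ) 1, (a * z + b) / (c * z + d) ∈ ball (0:ℂ) 1)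
      ↔ {w : ℂ | ‖d * w - b‖ < ‖a - c * w‖} ⊆ ball 0 1 := by
        rw [← image_lft_ball hden hdet, ← mapsTo_iff_image_subset]; rfl
    _ ↔ ∀ w : ℂ, 1 ≤ ‖w‖ → ‖a - c * w‖ ^ 2 - ‖d * w - b‖ ^ 2 ≤ 0 := by
        refine forall_congr' fun w => ?_
        rw [mem_ofPred_eq, mem_ball_zero_iff, sub_nonpos,
          sq_le_sq₀ (norm_nonneg _) (norm_nonneg _), ← not_lt, ← not_lt]
        exact not_imp_not.symm
    _ ↔ ∀ r : ℝ, 1 ≤ r →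
          ‖a‖ ^ 2 - ‖b‖ ^ 2 - (‖d‖ ^ 2 - ‖c‖ ^ 2) * r ^ 2 +
            2 * ‖b * conj d - a * conj c‖ * r ≤ 0 := by
        simp only [sq_norm_sub_mul_sub_sq_norm_mul_sub]
        exact forall_one_le_norm_quadratic_nonpos_iff _ _ _
    _ ↔ _ := forall_one_le_quadratic_nonpos_iff (norm_nonneg _) hQ
          (sq_norm_sub_sq_norm_mul_sq_norm_sub_sq_norm a b c d)
end
end

section
/- Let φ(z) = (az+b)/(cz+d) with ad − bc = 1 be a nonconstant holomorphic self-map of 𝔻. Then σ(z) = (conj(a)z − conj(c))/(−conj(b)z + conj(d)) is also a holomorphic self-map of 𝔻. -/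
/-!
With `ι z = 1 / conj z`, one has `σ = ι ∘ φ⁻¹ ∘ ι`, and `ι` swaps the disc with the exterior of the
closed disc. By continuity `φ` maps the closed disc into itself, so `φ⁻¹` maps the exterior of the
closed disc into itself, hence `σ` maps `𝔻` into `𝔻`. Working with `‖numerator‖ < ‖denominator‖`
in homogeneous coordinates avoids the points at infinity.
-/

open Complex Metric Filter Set

noncomputable section

theorem le_on_closedBall_of_lt_on_ball {E : Type*} [NormedAddCommGroup E] [NormedSpace ℝ E]
    {f g : E → ℝ} (hf : Continuous f) (hg : Continuous g) {x : E} {r : ℝ} (hr : r ≠ 0)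
    (h : ∀ z ∈ ball x r, f z < g z) : ∀ z ∈ closedBall x r, f z ≤ g z := by
  rw [← closure_ball x hr]
  exact (closure_mono h).trans (closure_lt_subset_le hf hg)

theorem norm_mul_add_lt_of_div_mem_ball {a b c d : ℂ}
    (hden : ∀ z ∈ ball (0 : ℂ) 1, c * z + d ≠ 0)
    (hφ : ∀ z ∈ ball (0 : ℂ) 1, (a * z + b) / (c * z + d) ∈ ball (0 : ℂ) 1) :
    ∀ z ∈ ball (0 : ℂ) 1, ‖a * z + b‖ < ‖c * z + d‖ := by
  intro z hz
  have h := hφ z hz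
  rwa [mem_ball_zero_iff, norm_div, div_lt_one (norm_pos_iff.2 (hden z hz))] at h

theorem norm_mul_add_mul_le {a b c d : ℂ}
    (hlt : ∀ z ∈ ball (0 : ℂ) 1, ‖a * z + b‖ < ‖c * z + d‖) {p q : ℂ} (hpq : ‖p‖ ≤ ‖q‖) :
    ‖a * p + b * q‖ ≤ ‖c * p + d * q‖ := by
  rcases eq_or_ne q 0 with rfl | hq
  · simp [norm_le_zero_iff.1 (by simpa using hpq)]
  have hv : p / q ∈ closedBall (0 : ℂ) 1 := by
    rwa [mem_closedBall_zero_iff, norm_div, div_le_one (norm_pos_iff.2 hq)]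
  have hle := le_on_closedBall_of_lt_on_ball (by fun_prop) (by fun_prop) one_ne_zero hlt _ hv
  have hnum : a * p + b * q = q * (a * (p / q) + b) := by field_simp
  have hden : c * p + d * q = q * (c * (p / q) + d) := by field_simp
  rw [hnum, hden, norm_mul, norm_mul]
  exact mul_le_mul_of_nonneg_left hle (norm_nonneg q)

theorem norm_mul_sub_lt_norm_sub_mul {a b c d : ℂ} (hdet : a * d - b * c = 1)
    (hlt : ∀ z ∈ ball (0 : ℂ) 1, ‖a * z + b‖ < ‖c * z + d‖) {w : ℂ} (hw : ‖w‖ < 1) :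
    ‖a * w - c‖ < ‖d - b * w‖ := by
  by_contra! hle
  -- `(d - b w) / (a w - c) = φ⁻¹ (1 / w)` would lie in the closed disc while `‖1 / w‖ > 1`.
  have h := norm_mul_add_mul_le hlt hle
  have hnum : a * (d - b * w) + b * (a * w - c) = 1 := by linear_combination hdet
  have hden : c * (d - b * w) + d * (a * w - c) = w := by linear_combination w * hdet
  rw [hnum, hden, norm_one] at h
  exact h.not_gt hw

theorem selfMapD_div_of_norm_lt {f g : ℂ → ℂ} (hf : DifferentiableOn ℂ f (ball 0 1))
    (hg : DifferentiableOn ℂ g (ball 0 1)) (hlt : ∀ z ∈ ball (0 : ℂ) 1, ‖f z‖ < ‖g z‖) :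
    SelfMapD (fun z => f z / g z) := by
  have hpos : ∀ z ∈ ball (0 : ℂ) 1, 0 < ‖g z‖ := fun z hz => (norm_nonneg _).trans_lt (hlt z hz)
  refine ⟨hf.div hg fun z hz => norm_pos_iff.1 (hpos z hz), fun z hz => ?_⟩
  rw [mem_ball_zero_iff, norm_div, div_lt_one (hpos z hz)]
  exact hlt z hz

/-- if `φ = (az+b)/(cz+d)` with `ad - bc = 1` is a holomorphic self-map of
`𝔻`, then `σ(z) = (conj(a)z - conj(c))/(-conj(b)z + conj(d))` is also a holomorphic
self-map of `𝔻`. -/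
theorem cowen_sigma_self_map
    (a b c d : ℂ) (hdet : a * d - b * c = 1)
    (hden : ∀ z ∈ Metric.ball (0:ℂ) 1, c * z + d ≠ 0)
    (hφ : ∀ z ∈ Metric.ball (0:ℂ) 1, (a * z + b) / (c * z + d) ∈ Metric.ball (0:ℂ) 1) :
    SelfMapD (fun z => ((starRingEnd ℂ) a * z - (starRingEnd ℂ) c) /
      (-(starRingEnd ℂ) b * z + (starRingEnd ℂ) d)) := by
  refine selfMapD_div_of_norm_lt (by fun_prop) (by fun_prop) fun z hz => ?_
  have hz' : ‖(starRingEnd ℂ) z‖ < 1 := by rwa [RCLike.norm_conj, ← mem_ball_zero_iff]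
  have h := norm_mul_sub_lt_norm_sub_mul hdet (norm_mul_add_lt_of_div_mem_ball hden hφ) hz'
  have hnum : (starRingEnd ℂ) a * z - (starRingEnd ℂ) c =
      (starRingEnd ℂ) (a * (starRingEnd ℂ) z - c) := by simp
  have hden' : -(starRingEnd ℂ) b * z + (starRingEnd ℂ) d =
      (starRingEnd ℂ) (d - b * (starRingEnd ℂ) z) := by simp [neg_mul, neg_add_eq_sub]
  rwa [hnum, hden', RCLike.norm_conj, RCLike.norm_conj]
end
end
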